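/- arXiv:2210.15233 — 3 statements merged into one kernel-verified Lean document; each statement's English description precedes it below -/
import Mathlib

section
/- Let α > 0. The map p_α sending F to u(x) = log(F'(x)) is a bijection from the set B̃_α of smooth F : ℝ → ℝ_{>0} with F' > 0 and F(x+2π) = e^{2πα}F(x), onto the set Ã_α of smooth u : ℝ → ℝ with u(x+2π) = u(x) + 2πα. Its inverse is u ↦ F(x) = (1/(e^{2πα}-1))·(e^{2πα}∫₀ˣ e^{u(s)}ds + ∫ₓ^{2π} e^{u(s)}ds). -/
open Real
open scoped ENNReal NNReal Topology

/-- The set B̃_α. -/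
def BSet (α : ℝ) : Set (ℝ → ℝ) :=
  {F | ContDiff ℝ (⊤ : ℕ∞) F ∧ (∀ x, 0 < F x) ∧ (∀ x, 0 < deriv F x) ∧
    ∀ x, F (x + 2*π) = Real.exp (2*π*α) * F x}

/-- The set Ã_α of quasi-periodic functions. -/
def ASet (α : ℝ) : Set (ℝ → ℝ) :=
  {u | ContDiff ℝ (⊤ : ℕ∞) u ∧ ∀ x, u (x + 2*π) = u x + 2*π*α}

/-- The map p_α. -/
noncomputable def pMap (F : ℝ → ℝ) : ℝ → ℝ := fun x => Real.log (deriv F x)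

/-- The claimed inverse of p_α. -/
noncomputable def pInv (α : ℝ) (u : ℝ → ℝ) : ℝ → ℝ := fun x =>
  (1 / (Real.exp (2*π*α) - 1)) *
    ((Real.exp (2*π*α) * ∫ s in (0:ℝ)..x, Real.exp (u s)) + ∫ s in x..(2*π), Real.exp (u s))

namespace PAlphaAux

lemma deriv_quasi {α : ℝ} {F : ℝ → ℝ} (hF : F ∈ BSet α) (x : ℝ) :
    deriv F (x + 2*π) = Real.exp (2*π*α) * deriv F x := by
  obtain ⟨hs, _, _, hq⟩ := hF
  have h1 : deriv (fun y => F (y + 2*π)) x = deriv F (x + 2*π) := by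
    simpa using deriv_comp_add_const F (2*π) x
  have h2 : (fun y => F (y + 2*π)) = fun y => Real.exp (2*π*α) * F y := funext hq
  rw [← h1, h2, deriv_const_mul _ (hs.differentiable (by simp)).differentiableAt]

lemma contDiff_deriv {F : ℝ → ℝ} (hs : ContDiff ℝ (⊤ : ℕ∞) F) : ContDiff ℝ (⊤ : ℕ∞) (deriv F) :=
  (contDiff_infty_iff_deriv.1 hs).2

lemma mapsTo {α : ℝ} : Set.MapsTo pMap (BSet α) (ASet α) := by
  intro F hF
  obtain ⟨hs, hpos, hd, hq⟩ := hF
  have hds : ContDiff ℝ (⊤ : ℕ∞) (deriv F) := contDiff_deriv hs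
  constructor
  · exact hds.log fun x => (hd x).ne'
  · intro x
    unfold pMap
    rw [deriv_quasi ⟨hs, hpos, hd, hq⟩, Real.log_mul (Real.exp_pos _).ne' (hd x).ne',
      Real.log_exp]
    ring

lemma hasDerivAt_pInv {α : ℝ} {u : ℝ → ℝ} (hα : 0 < α) (hu : u ∈ ASet α) (x : ℝ) :
    HasDerivAt (pInv α u) (Real.exp (u x)) x := by
  obtain ⟨hs, hq⟩ := hu
  set E := Real.exp (2*π*α) with hE
  have hE1 : (1:ℝ) < E := Real.one_lt_exp_iff.2 (by positivity)
  set c := 1 / (E - 1) with hc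
  have hcont : Continuous fun s => Real.exp (u s) := Real.continuous_exp.comp hs.continuous
  have hint : ∀ a b : ℝ, IntervalIntegrable (fun s => Real.exp (u s)) MeasureTheory.volume a b :=
    fun a b => hcont.intervalIntegrable a b
  have hrw : pInv α u = fun y =>
      (c * E - c) * (∫ s in (0:ℝ)..y, Real.exp (u s)) + c * ∫ s in (0:ℝ)..(2*π), Real.exp (u s) := by
    funext y
    have := intervalIntegral.integral_add_adjacent_intervals (a := 0) (b := y) (c := 2*π)
      (hint 0 y) (hint y (2*π))
    unfold pInv
    rw [← hE, ← hc, ← this]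
    ring
  have hA : HasDerivAt (fun y => ∫ s in (0:ℝ)..y, Real.exp (u s)) (Real.exp (u x)) x :=
    intervalIntegral.integral_hasDerivAt_right (hint 0 x)
      (hcont.stronglyMeasurableAtFilter _ _) hcont.continuousAt
  have key : HasDerivAt (pInv α u) ((c * E - c) * Real.exp (u x)) x := by
    rw [hrw]
    exact ((hA.const_mul (c * E - c)).add_const _)
  have hcE : (c * E - c) = 1 := by
    rw [hc]
    have : E - 1 ≠ 0 := by linarith
    field_simp
  rwa [hcE, one_mul] at key

lemma right_inv {α : ℝ} (hα : 0 < α) {u : ℝ → ℝ} (hu : u ∈ ASet α) :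
    pMap (pInv α u) = u := by
  funext x
  unfold pMap
  rw [(hasDerivAt_pInv hα hu x).deriv, Real.log_exp]

lemma pInv_mem {α : ℝ} (hα : 0 < α) {u : ℝ → ℝ} (hu : u ∈ ASet α) :
    pInv α u ∈ BSet α := by
  obtain ⟨hs, hq⟩ := hu
  set E := Real.exp (2*π*α) with hE
  have hE1 : (1:ℝ) < E := Real.one_lt_exp_iff.2 (by positivity)
  have hderiv : deriv (pInv α u) = fun x => Real.exp (u x) :=
    funext fun x => (hasDerivAt_pInv hα ⟨hs, hq⟩ x).deriv
  have hexpu : ContDiff ℝ (⊤ : ℕ∞) (fun x => Real.exp (u x)) := Real.contDiff_exp.comp hs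
  have hsmooth : ContDiff ℝ (⊤ : ℕ∞) (pInv α u) := by
    refine contDiff_infty_iff_deriv.2 ⟨fun x => (hasDerivAt_pInv hα ⟨hs, hq⟩ x).differentiableAt, ?_⟩
    rw [hderiv]
    exact hexpu
  have hcont : Continuous fun s => Real.exp (u s) := Real.continuous_exp.comp hs.continuous
  have hint : ∀ a b : ℝ, IntervalIntegrable (fun s => Real.exp (u s)) MeasureTheory.volume a b :=
    fun a b => hcont.intervalIntegrable a b
  have hquasi : ∀ x, pInv α u (x + 2*π) = E * pInv α u x := by
    intro x
    have hshift : (∫ s in (2*π)..(x + 2*π), Real.exp (u s))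
        = E * ∫ s in (0:ℝ)..x, Real.exp (u s) := by
      have h1 : (∫ s in (0:ℝ)..x, Real.exp (u (s + 2*π)))
          = ∫ s in (0+2*π)..(x + 2*π), Real.exp (u s) :=
        intervalIntegral.integral_comp_add_right (fun s => Real.exp (u s)) (2*π)
      have h2 : (∫ s in (0:ℝ)..x, Real.exp (u (s + 2*π)))
          = E * ∫ s in (0:ℝ)..x, Real.exp (u s) := by
        rw [← intervalIntegral.integral_const_mul]
        apply intervalIntegral.integral_congr
        intro s _
        show Real.exp (u (s + 2*π)) = E * Real.exp (u s)
        rw [hq s, Real.exp_add, hE, mul_comm]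
      rw [← h2, h1, zero_add]
    have hadd : (∫ s in (0:ℝ)..(x + 2*π), Real.exp (u s))
        = (∫ s in (0:ℝ)..(2*π), Real.exp (u s)) + E * ∫ s in (0:ℝ)..x, Real.exp (u s) := by
      rw [← hshift]
      exact (intervalIntegral.integral_add_adjacent_intervals (hint 0 (2*π)) (hint (2*π) _)).symm
    have hsplit : ∀ y : ℝ, (∫ s in y..(2*π), Real.exp (u s))
        = (∫ s in (0:ℝ)..(2*π), Real.exp (u s)) - ∫ s in (0:ℝ)..y, Real.exp (u s) := by
      intro y
      rw [eq_sub_iff_add_eq, add_comm]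
      exact intervalIntegral.integral_add_adjacent_intervals (hint 0 y) (hint y (2*π))
    unfold pInv
    rw [← hE, hadd, hsplit (x + 2*π), hsplit x, hadd]
    ring
  have hmono : StrictMono (pInv α u) := by
    apply strictMono_of_deriv_pos
    intro x
    rw [hderiv]
    exact Real.exp_pos _
  have hpi : (0:ℝ) < 2*π := by positivity
  have hpos : ∀ x, 0 < pInv α u x := by
    intro x
    have h1 : pInv α u x < pInv α u (x + 2*π) := hmono (by linarith)
    rw [hquasi x] at h1
    nlinarith
  exact ⟨hsmooth, hpos, fun x => by rw [hderiv]; exact Real.exp_pos _, fun x => hquasi x⟩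

lemma left_inv {α : ℝ} (hα : 0 < α) {F : ℝ → ℝ} (hF : F ∈ BSet α) :
    pInv α (pMap F) = F := by
  obtain ⟨hs, hpos, hd, hq⟩ := hF
  set E := Real.exp (2*π*α) with hE
  have hE1 : (1:ℝ) < E := Real.one_lt_exp_iff.2 (by positivity)
  have hds : Continuous (deriv F) := (contDiff_deriv hs).continuous
  funext x
  have hexp : ∀ y : ℝ, (∫ s in (0:ℝ)..y, Real.exp (pMap F s)) = F y - F 0 := by
    intro y
    have h1 : (∫ s in (0:ℝ)..y, Real.exp (pMap F s)) = ∫ s in (0:ℝ)..y, deriv F s := by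
      apply intervalIntegral.integral_congr
      intro s _
      exact Real.exp_log (hd s)
    rw [h1]
    exact intervalIntegral.integral_deriv_eq_sub
      (fun s _ => (hs.differentiable (by simp)).differentiableAt)
      (hds.intervalIntegrable 0 y)
  have hsplit : (∫ s in x..(2*π), Real.exp (pMap F s))
      = (F (2*π) - F 0) - (F x - F 0) := by
    rw [← hexp (2*π), ← hexp x, eq_sub_iff_add_eq, add_comm]
    have hint : ∀ a b : ℝ, IntervalIntegrable (fun s => Real.exp (pMap F s))
        MeasureTheory.volume a b := by
      intro a b
      exact (Real.continuous_exp.comp (hds.log fun s => (hd s).ne')).intervalIntegrable a b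
    exact intervalIntegral.integral_add_adjacent_intervals (hint 0 x) (hint x (2*π))
  have hF2pi : F (2*π) = E * F 0 := by
    have := hq 0
    rwa [zero_add] at this
  unfold pInv
  rw [← hE, hexp x, hsplit, hF2pi]
  have hE0 : E - 1 ≠ 0 := by linarith
  field_simp
  ring

end PAlphaAux

theorem p_alpha_bijective (α : ℝ) (hα : 0 < α) :
    Set.BijOn pMap (BSet α) (ASet α) ∧
    (∀ u ∈ ASet α, pMap (pInv α u) = u) ∧
    (∀ F ∈ BSet α, pInv α (pMap F) = F) := by
  refine ⟨⟨PAlphaAux.mapsTo, ?_, ?_⟩, fun u hu => PAlphaAux.right_inv hα hu,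
    fun F hF => PAlphaAux.left_inv hα hF⟩
  · intro F₁ h₁ F₂ h₂ heq
    rw [← PAlphaAux.left_inv hα h₁, ← PAlphaAux.left_inv hα h₂, heq]
  · intro u hu
    exact ⟨pInv α u, PAlphaAux.pInv_mem hα hu, PAlphaAux.right_inv hα hu⟩
end

section
/- Let f be a smooth orientation-preserving circle diffeomorphism (f' > 0, f(x+2π) = f(x)+2π) with f(y) = π for some y. Then the function u(x) = log(sin²((x-y)/2)) - log(cos²(f(x)/2)) + log(f'(x)), defined for x with f(x) ≠ π mod 2π, extends to a smooth 2π-periodic function on ℝ with u(y) = -log(f'(y)) and u'(y) = 0. -/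
open Real

/-- dslope of a smooth function is smooth. -/
lemma contDiff_dslope_of_contDiff {g : ℝ → ℝ} (hg : ContDiff ℝ (⊤ : ℕ∞) g) (a : ℝ) :
    ContDiff ℝ (⊤ : ℕ∞) (dslope g a) := by
  have hg' : ContDiff ℝ (⊤ : ℕ∞) (deriv g) := (contDiff_infty_iff_deriv.mp hg).2
  have hgd : Differentiable ℝ g := hg.differentiable (by simp)
  let χ : ContDiffBump (0 : ℝ) := ⟨1, 2, by norm_num, by norm_num⟩
  let k : ℝ → ℝ → ℝ := fun p w => χ w * deriv g (a - w * (p - a))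
  have hk : ContDiffOn ℝ (⊤ : ℕ∞) ↿k (Set.univ ×ˢ Set.univ) := by
    have : ContDiff ℝ (⊤ : ℕ∞) (fun q : ℝ × ℝ => χ q.2 * deriv g (a - q.2 * (q.1 - a))) :=
      (χ.contDiff.comp contDiff_snd).mul (hg'.comp (contDiff_const.sub
        (contDiff_snd.mul (contDiff_fst.sub contDiff_const))))
    exact this.contDiffOn
  have hgs : ∀ p, ∀ w, p ∈ (Set.univ : Set ℝ) → w ∉ Metric.closedBall (0 : ℝ) 2 → k p w = 0 := by
    intro p w _ hw
    have : χ w = 0 := by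
      by_contra hne
      have h1 : w ∈ Function.support χ := Function.mem_support.mpr hne
      rw [χ.support_eq] at h1
      exact hw (Metric.ball_subset_closedBall h1)
    simp only [k, this, zero_mul]
  let fi : ℝ → ℝ := Set.indicator (Set.Icc (0 : ℝ) 1) (fun _ => (1 : ℝ))
  have hfi : MeasureTheory.LocallyIntegrable fi MeasureTheory.volume :=
    ((continuous_const.integrableOn_Icc).integrable_indicator measurableSet_Icc).locallyIntegrable
  have H := MeasureTheory.contDiffOn_convolution_right_with_param (ContinuousLinearMap.lsmul ℝ ℝ) isOpen_univ
    (isCompact_closedBall (0 : ℝ) 2) hgs hfi hk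
  rw [Set.univ_prod_univ, contDiffOn_univ] at H
  have H2 := H.comp (contDiff_id.prodMk (contDiff_const : ContDiff ℝ (⊤ : ℕ∞) (fun _ : ℝ => (0 : ℝ))))
  convert H2 using 1
  funext p
  simp only [Function.comp_apply, id]
  rw [MeasureTheory.convolution_lsmul]
  have hint : ∀ t : ℝ, fi t • k p (0 - t)
      = Set.indicator (Set.Icc (0 : ℝ) 1) (fun t => deriv g ((p - a) * t + a)) t := by
    intro t
    by_cases ht : t ∈ Set.Icc (0 : ℝ) 1
    · have hχ : χ (0 - t) = 1 := by
        apply χ.one_of_mem_closedBall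
        rw [Metric.mem_closedBall, Real.dist_eq, abs_le]
        show -1 ≤ 0 - t - 0 ∧ 0 - t - 0 ≤ 1
        constructor <;> linarith [ht.1, ht.2]
      simp only [fi, k, Set.indicator_of_mem ht, hχ, one_mul, smul_eq_mul]
      congr 1; ring
    · simp only [fi, Set.indicator_of_notMem ht, zero_smul]
  simp_rw [hint]
  rw [MeasureTheory.integral_indicator measurableSet_Icc, MeasureTheory.integral_Icc_eq_integral_Ioc,
    ← intervalIntegral.integral_of_le zero_le_one]
  by_cases hp : p = a
  · subst hp
    simp [dslope_same]
  · rw [intervalIntegral.integral_comp_mul_add _ (sub_ne_zero.mpr hp)]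
    simp only [mul_zero, zero_add, mul_one, sub_add_cancel]
    rw [intervalIntegral.integral_deriv_eq_sub (fun x _ => hgd x)
      (hg'.continuous.intervalIntegrable _ _), dslope_of_ne _ hp, slope_def_field, smul_eq_mul]
    field_simp

theorem teichmueller_u_smooth_extension (f : ℝ → ℝ)
    (hf : ContDiff ℝ (⊤ : ℕ∞) f) (hf' : ∀ x, 0 < deriv f x)
    (hfq : ∀ x, f (x + 2*π) = f x + 2*π)
    (y : ℝ) (hy : f y = π) :
    ∃ u : ℝ → ℝ, ContDiff ℝ (⊤ : ℕ∞) u ∧ (∀ x, u (x + 2*π) = u x) ∧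
      (∀ x, Real.cos (f x / 2) ≠ 0 →
        u x = Real.log ((Real.sin ((x - y)/2))^2)
            - Real.log ((Real.cos (f x / 2))^2) + Real.log (deriv f x)) ∧
      u y = -Real.log (deriv f y) ∧ deriv u y = 0 := by
  classical
  have hfd : Differentiable ℝ f := hf.differentiable (by simp)
  have hdk : ∀ x, deriv f x ≠ 0 := fun x => ne_of_gt (hf' x)
  have hf'c : ContDiff ℝ (⊤ : ℕ∞) (deriv f) := (contDiff_infty_iff_deriv.mp hf).2
  have hf'd : Differentiable ℝ (deriv f) := hf'c.differentiable (by simp)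
  set F : ℝ → ℝ := fun x => Real.sin ((x - y)/2) with hFdef
  set G : ℝ → ℝ := fun x => Real.sin ((f x - π)/2) with hGdef
  have hFsm : ContDiff ℝ (⊤ : ℕ∞) F :=
    Real.contDiff_sin.comp ((contDiff_id.sub contDiff_const).div_const 2)
  have hGsm : ContDiff ℝ (⊤ : ℕ∞) G :=
    Real.contDiff_sin.comp ((hf.sub contDiff_const).div_const 2)
  have hGcont : Continuous G := hGsm.continuous
  have hmono : StrictMono f := strictMono_of_deriv_pos hf'
  -- values of f on the lattice y + k * 2π
  have hper : Function.Periodic (fun x => f x - x) (2*π) := fun x => by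
    show f (x + 2*π) - (x + 2*π) = f x - x
    rw [hfq x]; ring
  have hfk : ∀ k : ℤ, f (y + k * (2*π)) = π + k * (2*π) := by
    intro k
    have : f (y + k * (2*π)) - (y + k * (2*π)) = f y - y := (hper.int_mul k) y
    linarith [this, hy]
  -- zero sets
  have hGzero : ∀ x, G x = 0 ↔ ∃ k : ℤ, x = y + k * (2*π) := by
    intro x
    constructor
    · intro hx
      obtain ⟨n, hn⟩ := Real.sin_eq_zero_iff.mp hx
      refine ⟨n, hmono.injective ?_⟩
      rw [hfk n]; linarith
    · rintro ⟨k, rfl⟩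
      show Real.sin _ = 0
      rw [hfk k]
      have : (π + (k:ℝ) * (2*π) - π)/2 = (k:ℝ) * π := by ring
      rw [this, Real.sin_int_mul_pi]
  have hFzero : ∀ x, F x = 0 ↔ ∃ k : ℤ, x = y + k * (2*π) := by
    intro x
    constructor
    · intro hx
      obtain ⟨n, hn⟩ := Real.sin_eq_zero_iff.mp hx
      exact ⟨n, by linarith⟩
    · rintro ⟨k, rfl⟩
      show Real.sin _ = 0
      have : (y + (k:ℝ) * (2*π) - y)/2 = (k:ℝ) * π := by ring
      rw [this, Real.sin_int_mul_pi]
  have hFG : ∀ x, G x = 0 ↔ F x = 0 := fun x => by rw [hGzero, hFzero]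
  -- periodicity facts
  have hFper : ∀ x, F (x + 2*π) = -F x := by
    intro x
    show Real.sin _ = -Real.sin _
    have : (x + 2*π - y)/2 = (x - y)/2 + π := by ring
    rw [this, Real.sin_add_pi]
  have hGper : ∀ x, G (x + 2*π) = -G x := by
    intro x
    show Real.sin _ = -Real.sin _
    rw [hfq x]
    have : (f x + 2*π - π)/2 = (f x - π)/2 + π := by ring
    rw [this, Real.sin_add_pi]
  have hf'per : ∀ x, deriv f (x + 2*π) = deriv f x := by
    intro x
    have h1 : deriv (fun t => f (t + 2*π)) x = deriv f (x + 2*π) :=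
      deriv_comp_add_const f (2*π) x
    have h2 : (fun t => f (t + 2*π)) = fun t => f t + 2*π := funext hfq
    rw [h2, deriv_add_const] at h1
    exact h1.symm
  -- the extension of F/G
  set h : ℝ → ℝ := fun x => if G x = 0 then 1 / deriv f x else F x / G x with hhdef
  have hhper : ∀ x, h (x + 2*π) = h x := by
    intro x
    by_cases hx : G x = 0
    · have hx2 : G (x + 2*π) = 0 := by rw [hGper, hx, neg_zero]
      simp only [hhdef, if_pos hx, if_pos hx2, hf'per]
    · have hx2 : G (x + 2*π) ≠ 0 := by rw [hGper]; simpa using hx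
      simp only [hhdef, if_neg hx, if_neg hx2, hFper, hGper, neg_div_neg_eq]
  -- values at y
  have Gy0 : G y = 0 := by show Real.sin _ = 0; rw [hy]; simp
  have Fy0 : F y = 0 := by show Real.sin _ = 0; simp
  set Fh : ℝ → ℝ := dslope F y with hFhdef
  set Gh : ℝ → ℝ := dslope G y with hGhdef
  have idF : ∀ x, F x = (x - y) * Fh x := by
    intro x
    have := sub_smul_dslope F y x
    rw [Fy0, sub_zero, smul_eq_mul] at this
    exact this.symm
  have idG : ∀ x, G x = (x - y) * Gh x := by
    intro x
    have := sub_smul_dslope G y x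
    rw [Gy0, sub_zero, smul_eq_mul] at this
    exact this.symm
  have hFhan : ContDiff ℝ (⊤ : ℕ∞) Fh := contDiff_dslope_of_contDiff hFsm y
  have hGhan : ContDiff ℝ (⊤ : ℕ∞) Gh := contDiff_dslope_of_contDiff hGsm y
  have hFhd : Differentiable ℝ Fh := hFhan.differentiable (by simp)
  have hGhd : Differentiable ℝ Gh := hGhan.differentiable (by simp)
  -- first derivatives of F and G
  have derivF : ∀ x, HasDerivAt F (Real.cos ((x - y)/2) * (1/2)) x := by
    intro x
    have h1 : HasDerivAt (fun t : ℝ => (t - y)/2) (1/2) x := by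
      simpa using ((hasDerivAt_id x).sub_const y).div_const 2
    exact (Real.hasDerivAt_sin ((x - y)/2)).comp x h1
  have derivG : ∀ x, HasDerivAt G (Real.cos ((f x - π)/2) * (deriv f x / 2)) x := by
    intro x
    have h1 : HasDerivAt (fun t : ℝ => (f t - π)/2) (deriv f x / 2) x :=
      ((hfd x).hasDerivAt.sub_const π).div_const 2
    exact (Real.hasDerivAt_sin ((f x - π)/2)).comp x h1
  have Fhy : Fh y = 1/2 := by
    rw [hFhdef, dslope_same, (derivF y).deriv]
    simp
  have Ghy : Gh y = deriv f y / 2 := by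
    rw [hGhdef, dslope_same, (derivG y).deriv, hy]
    simp
  have hGhy0 : Gh y ≠ 0 := by
    rw [Ghy]
    exact div_ne_zero (hdk y) two_ne_zero
  have ev : ∀ᶠ x in nhds y, Gh x ≠ 0 :=
    hGhan.continuous.continuousAt.eventually_ne hGhy0
  set q : ℝ → ℝ := fun x => Fh x / Gh x with hqdef
  have hqan : ContDiffAt ℝ (⊤ : ℕ∞) q y := hFhan.contDiffAt.div hGhan.contDiffAt hGhy0
  have heq : h =ᶠ[nhds y] q := by
    filter_upwards [ev] with x hx
    by_cases hxy : x = y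
    · subst hxy
      simp only [hhdef, if_pos Gy0, hqdef, Fhy, Ghy]
      field_simp
    · have hGx : G x ≠ 0 := by
        rw [idG x]
        exact mul_ne_zero (sub_ne_zero.mpr hxy) hx
      simp only [hhdef, if_neg hGx, hqdef]
      rw [idF x, idG x, mul_div_mul_left _ _ (sub_ne_zero.mpr hxy)]
  have hhy : ContDiffAt ℝ (⊤ : ℕ∞) h y := hqan.congr_of_eventuallyEq heq
  -- smoothness of h everywhere
  have hhx : ∀ x, ContDiffAt ℝ (⊤ : ℕ∞) h x := by
    intro x
    by_cases hx : G x = 0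
    · obtain ⟨k, rfl⟩ := (hGzero x).mp hx
      have hper2 : Function.Periodic h (2*π) := hhper
      have hperk : ∀ t, h (t + (k:ℝ) * (2*π)) = h t := fun t => (hper2.int_mul k) t
      have hrw : h = fun t => h (t - (k:ℝ)*(2*π)) := by
        funext t
        conv_lhs => rw [show t = (t - (k:ℝ)*(2*π)) + (k:ℝ)*(2*π) by ring]
        rw [hperk]
      rw [hrw]
      have hsub : ContDiffAt ℝ (⊤ : ℕ∞) (fun t : ℝ => t - (k:ℝ)*(2*π)) (y + (k:ℝ)*(2*π)) :=
        (contDiff_id.sub contDiff_const).contDiffAt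
      have h2 : ContDiffAt ℝ (⊤ : ℕ∞) h ((y + (k:ℝ)*(2*π)) - (k:ℝ)*(2*π)) := by
        rw [add_sub_cancel_right]; exact hhy
      exact ContDiffAt.comp (y + (k:ℝ)*(2*π)) h2 hsub
    · have h1 : ContDiffAt ℝ (⊤ : ℕ∞) (fun z => F z / G z) x :=
        hFsm.contDiffAt.div hGsm.contDiffAt hx
      apply h1.congr_of_eventuallyEq
      filter_upwards [hGcont.continuousAt.eventually_ne hx] with z hz
      simp only [hhdef, if_neg hz]
  have hhne : ∀ x, h x ≠ 0 := by
    intro x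
    by_cases hx : G x = 0
    · simp only [hhdef, if_pos hx]
      exact one_div_ne_zero (hdk x)
    · simp only [hhdef, if_neg hx]
      exact div_ne_zero (fun h0 => hx ((hFG x).mpr h0)) hx
  have hvpos : ∀ x, 0 < h x ^ 2 * deriv f x := by
    intro x
    refine mul_pos ?_ (hf' x)
    exact lt_of_le_of_ne (sq_nonneg _) (Ne.symm (pow_ne_zero 2 (hhne x)))
  refine ⟨fun x => Real.log (h x ^ 2 * deriv f x), ?_, ?_, ?_, ?_, ?_⟩
  · exact contDiff_iff_contDiffAt.mpr fun x =>
      (((hhx x).pow 2).mul hf'c.contDiffAt).log (ne_of_gt (hvpos x))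
  · intro x
    simp only [hhper, hf'per]
  · intro x hcos
    have hGeq : G x = -Real.cos (f x / 2) := by
      show Real.sin _ = _
      have : (f x - π)/2 = f x/2 - π/2 := by ring
      rw [this, Real.sin_sub]
      simp
    have hGx : G x ≠ 0 := by rw [hGeq]; simpa using hcos
    have hFx : F x ≠ 0 := fun h0 => hGx ((hFG x).mpr h0)
    have hG2 : G x ^ 2 = Real.cos (f x / 2) ^ 2 := by rw [hGeq]; ring
    show Real.log (h x ^ 2 * deriv f x) = _
    simp only [hhdef, if_neg hGx]
    rw [div_pow, div_mul_eq_mul_div,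
      Real.log_div (mul_ne_zero (pow_ne_zero _ hFx) (hdk x)) (pow_ne_zero _ hGx),
      Real.log_mul (pow_ne_zero _ hFx) (hdk x), hG2]
    show _ = Real.log (F x ^ 2) - Real.log (Real.cos (f x / 2) ^ 2) + Real.log (deriv f x)
    ring
  · show Real.log (h y ^ 2 * deriv f y) = _
    simp only [hhdef, if_pos Gy0]
    have : (1/deriv f y)^2 * deriv f y = (deriv f y)⁻¹ := by
      have ha := hdk y
      field_simp
    rw [this, Real.log_inv]
  · -- derivative at y
    -- second derivative computations for F
    have hFh'an : Differentiable ℝ (deriv Fh) :=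
      (contDiff_infty_iff_deriv.mp hFhan).2.differentiable (by simp)
    have hGh'an : Differentiable ℝ (deriv Gh) :=
      (contDiff_infty_iff_deriv.mp hGhan).2.differentiable (by simp)
    have derivF_eq : deriv F =ᶠ[nhds y] fun x => Fh x + (x - y) * deriv Fh x := by
      filter_upwards [(Filter.Eventually.of_forall hFhd : ∀ᶠ x in nhds y, DifferentiableAt ℝ Fh x)] with x hx
      have h1 : HasDerivAt (fun t => (t - y) * Fh t)
          (1 * Fh x + (x - y) * deriv Fh x) x :=
        ((hasDerivAt_id x).sub_const y).mul hx.hasDerivAt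
      have h2 : F = fun t => (t - y) * Fh t := funext idF
      rw [h2, h1.deriv]; ring
    have derivG_eq : deriv G =ᶠ[nhds y] fun x => Gh x + (x - y) * deriv Gh x := by
      filter_upwards [(Filter.Eventually.of_forall hGhd : ∀ᶠ x in nhds y, DifferentiableAt ℝ Gh x)] with x hx
      have h1 : HasDerivAt (fun t => (t - y) * Gh t)
          (1 * Gh x + (x - y) * deriv Gh x) x :=
        ((hasDerivAt_id x).sub_const y).mul hx.hasDerivAt
      have h2 : G = fun t => (t - y) * Gh t := funext idG
      rw [h2, h1.deriv]; ring
    have hrhsF : HasDerivAt (fun x => Fh x + (x - y) * deriv Fh x)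
        (deriv Fh y + (1 * deriv Fh y + (y - y) * deriv (deriv Fh) y)) y :=
      ((hFhd y).hasDerivAt).add
        (((hasDerivAt_id y).sub_const y).mul hFh'an.differentiableAt.hasDerivAt)
    have hrhsG : HasDerivAt (fun x => Gh x + (x - y) * deriv Gh x)
        (deriv Gh y + (1 * deriv Gh y + (y - y) * deriv (deriv Gh) y)) y :=
      ((hGhd y).hasDerivAt).add
        (((hasDerivAt_id y).sub_const y).mul hGh'an.differentiableAt.hasDerivAt)
    have eF1 : deriv (deriv F) y
        = deriv Fh y + (1 * deriv Fh y + (y - y) * deriv (deriv Fh) y) := by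
      rw [derivF_eq.deriv_eq]; exact hrhsF.deriv
    have eG1 : deriv (deriv G) y
        = deriv Gh y + (1 * deriv Gh y + (y - y) * deriv (deriv Gh) y) := by
      rw [derivG_eq.deriv_eq]; exact hrhsG.deriv
    -- explicit second derivatives
    have dF2 : HasDerivAt (fun x => Real.cos ((x - y)/2) * (1/2))
        (-Real.sin ((y - y)/2) * (1/2) * (1/2)) y := by
      have h1 : HasDerivAt (fun t : ℝ => (t - y)/2) (1/2) y := by
        simpa using ((hasDerivAt_id y).sub_const y).div_const 2
      exact ((Real.hasDerivAt_cos ((y - y)/2)).comp y h1).mul_const (1/2)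
    have eF2 : deriv (deriv F) y = 0 := by
      have hfun : deriv F = fun x => Real.cos ((x - y)/2) * (1/2) :=
        funext fun x => (derivF x).deriv
      rw [hfun, dF2.deriv]
      simp
    have dG2 : HasDerivAt (fun x => Real.cos ((f x - π)/2) * (deriv f x / 2))
        ((-Real.sin ((f y - π)/2) * (deriv f y / 2)) * (deriv f y / 2)
          + Real.cos ((f y - π)/2) * (deriv (deriv f) y / 2)) y := by
      have h1 : HasDerivAt (fun t : ℝ => (f t - π)/2) (deriv f y / 2) y :=
        ((hfd y).hasDerivAt.sub_const π).div_const 2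
      have h2 : HasDerivAt (fun x => Real.cos ((f x - π)/2))
          (-Real.sin ((f y - π)/2) * (deriv f y / 2)) y :=
        h1.cos
      have h3 : HasDerivAt (fun x => deriv f x / 2) (deriv (deriv f) y / 2) y :=
        ((hf'd y).hasDerivAt).div_const 2
      exact h2.mul h3
    have eG2 : deriv (deriv G) y = deriv (deriv f) y / 2 := by
      have hfun : deriv G = fun x => Real.cos ((f x - π)/2) * (deriv f x / 2) :=
        funext fun x => (derivG x).deriv
      rw [hfun, dG2.deriv, hy]
      simp
    have hFh'y : deriv Fh y = 0 := by
      have := eF1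
      rw [eF2] at this
      simp only [sub_self, zero_mul, one_mul, add_zero] at this
      linarith
    have hGh'y : deriv Gh y = deriv (deriv f) y / 4 := by
      have := eG1
      rw [eG2] at this
      simp only [sub_self, zero_mul, one_mul, add_zero] at this
      linarith
    -- derivative of h at y
    have derivq : HasDerivAt q
        ((deriv Fh y * Gh y - Fh y * deriv Gh y) / Gh y ^ 2) y :=
      ((hFhd y).hasDerivAt).div ((hGhd y).hasDerivAt) hGhy0
    have hDh : deriv h y = -(deriv (deriv f) y) / (2 * (deriv f y)^2) := by
      rw [heq.deriv_eq, derivq.deriv, hFh'y, hGh'y, Fhy, Ghy]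
      have ha := hdk y
      field_simp
      ring
    have hhyval : h y = 1 / deriv f y := by simp only [hhdef, if_pos Gy0]
    have Hh : HasDerivAt h (deriv h y) y :=
      ((hhy.differentiableAt (by simp))).hasDerivAt
    have Hv : HasDerivAt (fun x => h x ^ 2 * deriv f x)
        (((2:ℕ):ℝ) * h y ^ 1 * deriv h y * deriv f y
          + h y ^ 2 * deriv (deriv f) y) y :=
      (Hh.pow 2).mul ((hf'd y).hasDerivAt)
    have hval : ((2:ℕ):ℝ) * h y ^ 1 * deriv h y * deriv f y
        + h y ^ 2 * deriv (deriv f) y = 0 := by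
      rw [hDh, hhyval]
      have ha := hdk y
      field_simp
      ring
    have Hu : HasDerivAt (fun x => Real.log (h x ^ 2 * deriv f x))
        ((((2:ℕ):ℝ) * h y ^ 1 * deriv h y * deriv f y
          + h y ^ 2 * deriv (deriv f) y) / (h y ^ 2 * deriv f y)) y :=
      Hv.log (ne_of_gt (hvpos y))
    rw [Hu.deriv, hval, zero_div]
end

section
/- Let α > 0, c > 0, t > 0. For the quadratic functional S(u,s,t) = -(ct/24)∫₀^{2π} u'(x)² dx - (1/2)u(x₁) - (1/2)u(x₂) + u(s) over functions u with u(x+2π) = u(x)+2πα, where x₁ < s < x₂ in [0,2π], the continuous piecewise-linear critical point u_cl (linear away from x₁, s, x₂, with derivative jumps +6/(ct) at x₁ and x₂ and -12/(ct) at s, and quasi-periodic) has slope m(s) = α - (3/(ctπ))(2s - x₁ - x₂) on [0,x₁], and the critical value is S(u_cl,s,t) = (3/(2ct))(x₂-x₁) - (3/(4πct))·(2s - x₁ - x₂ - (ctπ/3)α)². -/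
/-!
On each of the four pieces cut out by `x₁ < s < x₂` the function is affine, so `u'` is a step
function and the Dirichlet integral is the sum of `slope² · length`. The increment over a period is
`2πm + (6/(ct))(2s - x₁ - x₂)`, which is why the outer slope `m(s)` is chosen as it is; the critical
value is then an identity of rational functions.
-/

open Real Set

lemma deriv_eq_of_eqOn_affine {u : ℝ → ℝ} {U : Set ℝ} {A B x : ℝ} (hU : IsOpen U)
    (hu : EqOn u (fun y => A * y + B) U) (hx : x ∈ U) : deriv u x = A := by
  rw [(hu.eventuallyEq_of_mem (hU.mem_nhds hx)).deriv_eq]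
  simp

lemma integral_sq_deriv_of_eqOn_affine {u : ℝ → ℝ} {U : Set ℝ} {P Q A B : ℝ} (hU : IsOpen U)
    (hPQ : uIoo P Q ⊆ U) (hu : EqOn u (fun y => A * y + B) U) :
    IntervalIntegrable (fun x => deriv u x ^ 2) MeasureTheory.volume P Q ∧
      ∫ x in P..Q, deriv u x ^ 2 = (Q - P) * A ^ 2 := by
  have hconst : EqOn (fun x => deriv u x ^ 2) (fun _ => A ^ 2) (uIoo P Q) := fun x hx => by
    simp only [deriv_eq_of_eqOn_affine hU hu (hPQ hx)]
  exact ⟨(intervalIntegrable_congr_uIoo hconst).2 intervalIntegrable_const,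
    by rw [intervalIntegral.integral_congr_uIoo hconst, intervalIntegral.integral_const,
      smul_eq_mul]⟩

noncomputable def piecewiseAffine (x₁ s x₂ m₀ m₁ m₂ m₃ n x : ℝ) : ℝ :=
  if x ≤ x₁ then m₀*x + n
  else if x ≤ s then m₀*x₁ + n + m₁*(x - x₁)
  else if x ≤ x₂ then m₀*x₁ + n + m₁*(s - x₁) + m₂*(x - s)
  else m₀*x₁ + n + m₁*(s - x₁) + m₂*(x₂ - s) + m₃*(x - x₂)

namespace piecewiseAffine

variable {x₁ s x₂ m₀ m₁ m₂ m₃ n x : ℝ}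

lemma apply_of_le_left (hx : x ≤ x₁) :
    piecewiseAffine x₁ s x₂ m₀ m₁ m₂ m₃ n x = m₀*x + n := by
  simp [piecewiseAffine, hx]

lemma apply_middle (h1 : x₁ < s) :
    piecewiseAffine x₁ s x₂ m₀ m₁ m₂ m₃ n s = m₀*x₁ + n + m₁*(s - x₁) := by
  simp [piecewiseAffine, h1.not_ge]

lemma apply_of_le_right (h1 : x₁ < s) (h2 : s < x₂) (hx : x₂ ≤ x) :
    piecewiseAffine x₁ s x₂ m₀ m₁ m₂ m₃ n x
      = m₀*x₁ + n + m₁*(s - x₁) + m₂*(x₂ - s) + m₃*(x - x₂) := by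
  have hs : ¬ x ≤ s := by linarith
  have hx₁ : ¬ x ≤ x₁ := by linarith
  rcases hx.eq_or_lt with rfl | hlt
  · simp [piecewiseAffine, hs, hx₁]
  · simp [piecewiseAffine, hs, hx₁, hlt.not_ge]

lemma eqOn_Iio :
    EqOn (piecewiseAffine x₁ s x₂ m₀ m₁ m₂ m₃ n) (fun y => m₀ * y + n) (Iio x₁) :=
  fun _ hy => apply_of_le_left (le_of_lt hy)

lemma eqOn_Ioo_left :
    EqOn (piecewiseAffine x₁ s x₂ m₀ m₁ m₂ m₃ n) (fun y => m₁ * y + (m₀*x₁ + n - m₁*x₁))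
      (Ioo x₁ s) := fun y hy => by
  simp only [piecewiseAffine, hy.1.not_ge, hy.2.le, if_false, if_true]
  ring

lemma eqOn_Ioo_right (h1 : x₁ < s) :
    EqOn (piecewiseAffine x₁ s x₂ m₀ m₁ m₂ m₃ n)
      (fun y => m₂ * y + (m₀*x₁ + n + m₁*(s - x₁) - m₂*s)) (Ioo s x₂) := fun y hy => by
  simp only [piecewiseAffine, (h1.trans hy.1).not_ge, hy.1.not_ge, hy.2.le, if_false, if_true]
  ring

lemma eqOn_Ioi (h1 : x₁ < s) (h2 : s < x₂) :
    EqOn (piecewiseAffine x₁ s x₂ m₀ m₁ m₂ m₃ n)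
      (fun y => m₃ * y + (m₀*x₁ + n + m₁*(s - x₁) + m₂*(x₂ - s) - m₃*x₂)) (Ioi x₂) :=
  fun y hy => by
    rw [apply_of_le_right h1 h2 (le_of_lt hy)]
    ring

lemma integral_sq_deriv {P Q : ℝ} (hP : P ≤ x₁) (h1 : x₁ < s) (h2 : s < x₂) (hQ : x₂ ≤ Q) :
    ∫ x in P..Q, deriv (piecewiseAffine x₁ s x₂ m₀ m₁ m₂ m₃ n) x ^ 2
      = (x₁ - P) * m₀^2 + (s - x₁) * m₁^2 + (x₂ - s) * m₂^2 + (Q - x₂) * m₃^2 := by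
  obtain ⟨i₀, e₀⟩ := integral_sq_deriv_of_eqOn_affine isOpen_Iio
    (by rw [uIoo_of_le hP]; exact Ioo_subset_Iio_self) eqOn_Iio
  obtain ⟨i₁, e₁⟩ := integral_sq_deriv_of_eqOn_affine isOpen_Ioo
    (uIoo_of_le h1.le).subset eqOn_Ioo_left
  obtain ⟨i₂, e₂⟩ := integral_sq_deriv_of_eqOn_affine isOpen_Ioo
    (uIoo_of_le h2.le).subset (eqOn_Ioo_right h1)
  obtain ⟨i₃, e₃⟩ := integral_sq_deriv_of_eqOn_affine isOpen_Ioi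
    (by rw [uIoo_of_le hQ]; exact Ioo_subset_Ioi_self) (eqOn_Ioi h1 h2)
  rw [← intervalIntegral.integral_add_adjacent_intervals i₀ (i₁.trans (i₂.trans i₃)),
    ← intervalIntegral.integral_add_adjacent_intervals i₁ (i₂.trans i₃),
    ← intervalIntegral.integral_add_adjacent_intervals i₂ i₃, e₀, e₁, e₂, e₃]
  ring

end piecewiseAffine

theorem piecewise_linear_critical_point_general (α c t : ℝ) (hc : 0 < c) (ht : 0 < t)
    (x₁ s x₂ : ℝ) (h0 : 0 ≤ x₁) (h1 : x₁ < s) (h2 : s < x₂) (h3 : x₂ ≤ 2*π)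
    (n : ℝ) (m a b : ℝ)
    (hm : m = α - 3/(c*t*π) * (2*s - x₁ - x₂))
    (ha : a = m + 6/(c*t)) (hb : b = m - 6/(c*t))
    (u : ℝ → ℝ)
    (hu : ∀ x, u x =
      if x ≤ x₁ then m*x + n
      else if x ≤ s then m*x₁ + n + a*(x - x₁)
      else if x ≤ x₂ then m*x₁ + n + a*(s - x₁) + b*(x - s)
      else m*x₁ + n + a*(s - x₁) + b*(x₂ - s) + m*(x - x₂)) :
    -- quasi-periodicity over one period
    u (2*π) = u 0 + 2*π*α ∧
    -- slope on the initial segment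
    (∀ x ∈ Set.Ioo 0 x₁, deriv u x = m) ∧
    -- the critical value of the functional
    -(c*t/24) * (∫ x in (0:ℝ)..(2*π), (deriv u x)^2)
        - (1/2) * u x₁ - (1/2) * u x₂ + u s
      = 3/(2*c*t) * (x₂ - x₁)
        - 3/(4*π*c*t) * (2*s - x₁ - x₂ - (c*t*π/3)*α)^2 := by
  obtain rfl : u = piecewiseAffine x₁ s x₂ m a b m n := funext hu
  have hct : c * t ≠ 0 := by positivity
  have hπ : π ≠ 0 := pi_pos.ne'
  refine ⟨?_, fun x hx => deriv_eq_of_eqOn_affine isOpen_Iio piecewiseAffine.eqOn_Iio hx.2, ?_⟩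
  · rw [piecewiseAffine.apply_of_le_right h1 h2 h3, piecewiseAffine.apply_of_le_left h0]
    subst ha hb hm
    field_simp
    ring
  · rw [piecewiseAffine.integral_sq_deriv h0 h1 h2 h3, piecewiseAffine.apply_of_le_left le_rfl,
      piecewiseAffine.apply_middle h1, piecewiseAffine.apply_of_le_right h1 h2 le_rfl]
    subst ha hb hm
    field_simp
    ring

theorem piecewise_linear_critical_point (α c t : ℝ) (hα : 0 < α) (hc : 0 < c) (ht : 0 < t)
    (x₁ s x₂ : ℝ) (h0 : 0 ≤ x₁) (h1 : x₁ < s) (h2 : s < x₂) (h3 : x₂ ≤ 2*π)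
    (n : ℝ) (m a b : ℝ)
    (hm : m = α - 3/(c*t*π) * (2*s - x₁ - x₂))
    (ha : a = m + 6/(c*t)) (hb : b = m - 6/(c*t))
    (u : ℝ → ℝ)
    (hu : ∀ x, u x =
      if x ≤ x₁ then m*x + n
      else if x ≤ s then m*x₁ + n + a*(x - x₁)
      else if x ≤ x₂ then m*x₁ + n + a*(s - x₁) + b*(x - s)
      else m*x₁ + n + a*(s - x₁) + b*(x₂ - s) + m*(x - x₂)) :
    -- quasi-periodicity over one period
    u (2*π) = u 0 + 2*π*α ∧
    -- slope on the initial segment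
    (∀ x ∈ Set.Ioo 0 x₁, deriv u x = m) ∧
    -- the critical value of the functional
    -(c*t/24) * (∫ x in (0:ℝ)..(2*π), (deriv u x)^2)
        - (1/2) * u x₁ - (1/2) * u x₂ + u s
      = 3/(2*c*t) * (x₂ - x₁)
        - 3/(4*π*c*t) * (2*s - x₁ - x₂ - (c*t*π/3)*α)^2 :=
  piecewise_linear_critical_point_general α c t hc ht x₁ s x₂ h0 h1 h2 h3 n m a b hm ha hb u hu
end
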